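/- arXiv:1301.3551 — 3 statements merged into one kernel-verified Lean document; each statement's English description precedes it below -/
import Mathlib

section
/- Let A and B be n×n real positive semidefinite matrices with nonnegative entries and tr(A) = tr(B) = 1, and suppose A_{ii} = 1/n for all i = 1, …, n. Then for every α > 0 with α ≠ 1, the matrix-based Rényi entropy of the normalized Hadamard product dominates that of B: S_α( (A ∘ B)/tr(A ∘ B) ) ≥ S_α(B), where (A ∘ B)_{ij} = A_{ij} B_{ij} is the Hadamard (entrywise) product. -/
open scoped BigOperators Matrix

/-- The trace of the `α`-th power of a Hermitian matrix, computed through its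
spectral decomposition: `tr(A^α) = ∑ i, λ_i ^ α` (with the convention `0 ^ α = 0`). -/
noncomputable def matrixPowTrace {ι : Type*} [Fintype ι] [DecidableEq ι]
    (α : ℝ) (A : Matrix ι ι ℝ) : ℝ :=
  if hA : A.IsHermitian then ∑ i, (hA.eigenvalues i) ^ α else 0

/-- The matrix-based Rényi entropy `S_α(A) = (1/(1-α)) · log₂ (tr (A^α))`. -/
noncomputable def matrixRenyiEntropy {ι : Type*} [Fintype ι] [DecidableEq ι]
    (α : ℝ) (A : Matrix ι ι ℝ) : ℝ :=
  (1 / (1 - α)) * Real.logb 2 (matrixPowTrace α A)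

/-!
Put `C = n • A`, a positive semidefinite matrix with unit diagonal; the normalised Hadamard
product is then `C ⊙ B`. If `u_k` and `v_l` are orthonormal eigenvectors of `C ⊙ B` and `B`,
the eigenvalues satisfy `μ = D λ` with `D k l = (u_k ∘ v_l)ᵀ C (u_k ∘ v_l)`. This `D` is doubly
stochastic: its entries are nonnegative because `C ⪰ 0`, and its row and column sums are `1`
because `C` has unit diagonal and `∑_l v_l v_lᵀ = 1`. So `μ` is majorised by `λ`, and Jensen's
inequality for `x ↦ x ^ α` (concave for `α < 1`, convex for `α > 1`) compares `∑ μ_k ^ α` with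
`∑ λ_l ^ α` in the direction that makes the entropy of `μ` the larger one.
-/

open Matrix Finset

section SchurConvex

variable {ι : Type*} [Fintype ι] [DecidableEq ι] {D : Matrix ι ι ℝ} {s : Set ℝ} {f : ℝ → ℝ}
  {x : ι → ℝ}

theorem ConvexOn.sum_map_mulVec_le (hf : ConvexOn ℝ s f) (hD : D ∈ doublyStochastic ℝ ι)
    (hx : ∀ i, x i ∈ s) : ∑ i, f ((D *ᵥ x) i) ≤ ∑ i, f (x i) :=
  calc ∑ i, f ((D *ᵥ x) i) ≤ ∑ i, (D *ᵥ (f ∘ x)) i :=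
        sum_le_sum fun i _ => hf.map_sum_le (fun j _ => hD.1 i j)
          (sum_row_of_mem_doublyStochastic hD i) fun j _ => hx j
    _ = ∑ i, f (x i) := sum_mulVec_of_mem_doublyStochastic hD

theorem ConcaveOn.sum_le_sum_map_mulVec (hf : ConcaveOn ℝ s f) (hD : D ∈ doublyStochastic ℝ ι)
    (hx : ∀ i, x i ∈ s) : ∑ i, f (x i) ≤ ∑ i, f ((D *ᵥ x) i) := by
  simpa using hf.neg.sum_map_mulVec_le hD hx

end SchurConvex

section RenyiEntropy

variable {ι : Type*} [Fintype ι]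

noncomputable def renyiEntropy (α : ℝ) (p : ι → ℝ) : ℝ :=
  1 / (1 - α) * Real.logb 2 (∑ i, p i ^ α)

theorem sum_rpow_pos {p : ι → ℝ} (hp : ∀ i, 0 ≤ p i) (hsum : 0 < ∑ i, p i) (α : ℝ) :
    0 < ∑ i, p i ^ α := by
  obtain ⟨i, -, hi⟩ :=
    exists_lt_of_sum_lt (s := univ) (f := fun _ => (0 : ℝ)) (by simpa using hsum)
  exact sum_pos' (fun j _ => Real.rpow_nonneg (hp j) α) ⟨i, mem_univ i, Real.rpow_pos_of_pos hi α⟩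

variable [DecidableEq ι]

theorem Matrix.IsHermitian.matrixRenyiEntropy_eq {A : Matrix ι ι ℝ} (hA : A.IsHermitian)
    (α : ℝ) : matrixRenyiEntropy α A = renyiEntropy α hA.eigenvalues := by
  rw [matrixRenyiEntropy, matrixPowTrace, dif_pos hA, renyiEntropy]

theorem renyiEntropy_le_renyiEntropy_mulVec {α : ℝ} (hα : 0 < α) (hα1 : α ≠ 1)
    {D : Matrix ι ι ℝ} (hD : D ∈ doublyStochastic ℝ ι) {p : ι → ℝ} (hp : ∀ i, 0 ≤ p i)
    (hsum : 0 < ∑ i, p i) : renyiEntropy α p ≤ renyiEntropy α (D *ᵥ p) := by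
  have hDp : ∀ i, 0 ≤ (D *ᵥ p) i := nonneg_mulVec_of_mem_rowStochastic
    (mem_doublyStochastic_iff_mem_rowStochastic_and_mem_colStochastic.1 hD).1 hp
  have hDsum : 0 < ∑ i, (D *ᵥ p) i := by rwa [sum_mulVec_of_mem_doublyStochastic hD]
  rcases hα1.lt_or_gt with hlt | hgt
  · have hsums : ∑ i, p i ^ α ≤ ∑ i, (D *ᵥ p) i ^ α :=
      (Real.concaveOn_rpow hα.le hlt.le).sum_le_sum_map_mulVec hD hp
    have hcoef : 0 ≤ 1 / (1 - α) := one_div_nonneg.2 (by linarith)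
    exact mul_le_mul_of_nonneg_left
      (Real.logb_le_logb_of_le one_lt_two (sum_rpow_pos hp hsum α) hsums) hcoef
  · have hsums : ∑ i, (D *ᵥ p) i ^ α ≤ ∑ i, p i ^ α :=
      (convexOn_rpow hgt.le).sum_map_mulVec_le hD hp
    have hcoef : 1 / (1 - α) ≤ 0 := one_div_nonpos.2 (by linarith)
    exact mul_le_mul_of_nonpos_left
      (Real.logb_le_logb_of_le one_lt_two (sum_rpow_pos hDp hDsum α) hsums) hcoef

end RenyiEntropy

namespace Matrix

variable {ι : Type*} [Fintype ι] [DecidableEq ι]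

noncomputable def hadamardWeights (C U V : Matrix ι ι ℝ) : Matrix ι ι ℝ :=
  of fun k l => (Uᵀ k * Vᵀ l) ⬝ᵥ C *ᵥ (Uᵀ k * Vᵀ l)

theorem sum_dotProduct_mulVec_mul_col {V : Matrix ι ι ℝ} (hV : V ∈ orthogonalGroup ι ℝ)
    (C : Matrix ι ι ℝ) (x : ι → ℝ) :
    ∑ l, (x * Vᵀ l) ⬝ᵥ C *ᵥ (x * Vᵀ l) = ∑ i, C i i * x i ^ 2 := by
  have hVV := (mem_orthogonalGroup_iff _ _).1 hV
  calc ∑ l, (x * Vᵀ l) ⬝ᵥ C *ᵥ (x * Vᵀ l)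
      = ∑ i, ∑ j, x i * C i j * x j * (V * Vᵀ) i j := by
        simp only [dotProduct, mulVec, Pi.mul_apply, mul_apply, transpose_apply, mul_sum]
        rw [sum_comm]
        refine sum_congr rfl fun i _ => ?_
        rw [sum_comm]
        exact sum_congr rfl fun j _ => sum_congr rfl fun l _ => by ring
    _ = ∑ i, C i i * x i ^ 2 := by
        simp only [hVV, one_apply, mul_ite, mul_one, mul_zero, sum_ite_eq, mem_univ, if_true]
        exact sum_congr rfl fun i _ => by ring

theorem sum_sq_col_eq_one {U : Matrix ι ι ℝ} (hU : U ∈ orthogonalGroup ι ℝ) (k : ι) :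
    ∑ i, U i k ^ 2 = 1 := by
  simpa [mul_apply, sq] using congrFun (congrFun ((mem_orthogonalGroup_iff' _ _).1 hU) k) k

theorem hadamardWeights_mem_doublyStochastic {C U V : Matrix ι ι ℝ} (hC : C.PosSemidef)
    (hCdiag : ∀ i, C i i = 1) (hU : U ∈ orthogonalGroup ι ℝ) (hV : V ∈ orthogonalGroup ι ℝ) :
    hadamardWeights C U V ∈ doublyStochastic ℝ ι := by
  refine mem_doublyStochastic_iff_sum.2 ⟨fun k l => ?_, fun k => ?_, fun l => ?_⟩
  · simpa [hadamardWeights] using hC.dotProduct_mulVec_nonneg (Uᵀ k * Vᵀ l)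
  · simp only [hadamardWeights, of_apply, sum_dotProduct_mulVec_mul_col hV, hCdiag, one_mul,
      transpose_apply, sum_sq_col_eq_one hU]
  · simp only [hadamardWeights, of_apply, mul_comm (Uᵀ _), sum_dotProduct_mulVec_mul_col hU,
      hCdiag, one_mul, transpose_apply, sum_sq_col_eq_one hV]

theorem IsHermitian.apply_eq_sum_eigenvalues {B : Matrix ι ι ℝ} (hB : B.IsHermitian) (i j : ι) :
    B i j = ∑ l, hB.eigenvectorUnitary i l * hB.eigenvalues l * hB.eigenvectorUnitary j l := by
  conv_lhs => rw [hB.spectral_theorem]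
  simp [Unitary.conjStarAlgAut_apply, mul_apply, diagonal_apply]

theorem dotProduct_hadamard_mulVec_eq_sum_eigenvalues {B : Matrix ι ι ℝ} (hB : B.IsHermitian)
    (C : Matrix ι ι ℝ) (x : ι → ℝ) :
    x ⬝ᵥ (C ⊙ B) *ᵥ x = ∑ l, hB.eigenvalues l *
      ((x * (hB.eigenvectorUnitary : Matrix ι ι ℝ)ᵀ l) ⬝ᵥ
        C *ᵥ (x * (hB.eigenvectorUnitary : Matrix ι ι ℝ)ᵀ l)) := by
  simp only [dotProduct, mulVec, hadamard_apply, hB.apply_eq_sum_eigenvalues, Pi.mul_apply,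
    transpose_apply, mul_sum, sum_mul]
  conv_lhs => enter [2, i]; rw [sum_comm]
  rw [sum_comm]
  exact sum_congr rfl fun l _ => sum_congr rfl fun i _ => sum_congr rfl fun j _ => by ring

theorem eigenvalues_hadamard_eq_mulVec {C B : Matrix ι ι ℝ} (hM : (C ⊙ B).IsHermitian)
    (hB : B.IsHermitian) :
    hM.eigenvalues =
      hadamardWeights C hM.eigenvectorUnitary hB.eigenvectorUnitary *ᵥ hB.eigenvalues := by
  funext k
  rw [hM.eigenvalues_eq, RCLike.re_to_real, star_trivial,
    ← hM.eigenvectorUnitary_transpose_apply k, dotProduct_hadamard_mulVec_eq_sum_eigenvalues hB]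
  simp only [mulVec, dotProduct, hadamardWeights, of_apply, mul_comm (hB.eigenvalues _)]

end Matrix

theorem renyiEntropy_hadamard_ge_general {n : ℕ}
    (A B : Matrix (Fin n) (Fin n) ℝ)
    (hA : A.PosSemidef) (hB : B.PosSemidef)
    (htrB : B.trace = 1)
    (hdiag : ∀ i, A i i = 1 / (n : ℝ))
    (α : ℝ) (hα : 0 < α) (hα1 : α ≠ 1) :
    matrixRenyiEntropy α ((Matrix.trace (A ⊙ B))⁻¹ • (A ⊙ B)) ≥
      matrixRenyiEntropy α B := by
  have hn : (n : ℝ) ≠ 0 := Nat.cast_ne_zero.2 <| by rintro rfl; simp [trace] at htrB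
  have htr : trace (A ⊙ B) = (n : ℝ)⁻¹ := by
    rw [← mul_one (n : ℝ)⁻¹, ← htrB]
    simp only [trace, Matrix.diag, hadamard_apply, hdiag, one_div, mul_sum]
  set C := (n : ℝ) • A
  have hC : C.PosSemidef := hA.smul (Nat.cast_nonneg n)
  have hCdiag : ∀ i, C i i = 1 := fun i => by simp [C, hdiag, hn]
  have hM := (hC.hadamard hB).isHermitian
  have hsum : ∑ i, hB.isHermitian.eigenvalues i = 1 := by
    simpa [htrB] using hB.isHermitian.trace_eq_sum_eigenvalues.symm
  rw [ge_iff_le, htr, inv_inv, ← smul_hadamard, hB.isHermitian.matrixRenyiEntropy_eq,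
    hM.matrixRenyiEntropy_eq, eigenvalues_hadamard_eq_mulVec hM hB.isHermitian]
  exact renyiEntropy_le_renyiEntropy_mulVec hα hα1
    (hadamardWeights_mem_doublyStochastic hC hCdiag hM.eigenvectorUnitary.2
      hB.isHermitian.eigenvectorUnitary.2) hB.eigenvalues_nonneg (hsum ▸ one_pos)

theorem renyiEntropy_hadamard_ge {n : ℕ}
    (A B : Matrix (Fin n) (Fin n) ℝ)
    (hA : A.PosSemidef) (hB : B.PosSemidef)
    (hAnn : ∀ i j, 0 ≤ A i j) (hBnn : ∀ i j, 0 ≤ B i j)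
    (htrA : A.trace = 1) (htrB : B.trace = 1)
    (hdiag : ∀ i, A i i = 1 / (n : ℝ))
    (α : ℝ) (hα : 0 < α) (hα1 : α ≠ 1) :
    matrixRenyiEntropy α ((Matrix.trace (A ⊙ B))⁻¹ • (A ⊙ B)) ≥
      matrixRenyiEntropy α B :=
  renyiEntropy_hadamard_ge_general A B hA hB htrB hdiag α hα hα1
end

section
/- Let A and B be n×n real positive semidefinite matrices with nonnegative entries and tr(A) = tr(B) = 1, and suppose A_{ii} = 1/n for all i. Then the eigenvalue vector of B majorizes n times the eigenvalue vector of the Hadamard product A ∘ B; that is, if λ₁(A∘B) ≥ … ≥ λ_n(A∘B) and λ₁(B) ≥ … ≥ λ_n(B) denote the eigenvalues in decreasing order, then Σ_{i=1}^k n·λ_i(A∘B) ≤ Σ_{i=1}^k λ_i(B) for every k = 1, …, n, with equality of the full sums at k = n. -/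
/-! Put `C = n • A`, a positive semidefinite matrix with unit diagonal. Then
`n * tr (P * (A ⊙ B)) = tr ((P ⊙ C) * B)` for every `P`; with `P = 1` this gives the equality of
the full sums. For the partial sums take for `P` the spectral projection of `A ⊙ B` onto any `k`
of its eigenvectors. By the Schur product theorem `Q = P ⊙ C` satisfies `0 ≤ Q ≤ 1`, since
`1 - Q = (1 - P) ⊙ C`, and `tr Q = k`. In an eigenbasis of `B` this makes `tr (Q * B)` a
combination `∑ μⱼ tⱼ` of the eigenvalues of `B` with weights `tⱼ ∈ [0, 1]` summing to `k`, which
is at most the sum of the `k` largest `μⱼ` (Ky Fan's maximum principle). -/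

open scoped BigOperators Matrix

/-- The eigenvalues of a real matrix (through its spectral decomposition when it is
Hermitian; junk value `0` otherwise). -/
noncomputable def matrixEigs {n : ℕ} (A : Matrix (Fin n) (Fin n) ℝ) : Fin n → ℝ :=
  if hA : A.IsHermitian then hA.eigenvalues else 0

/-- `Majorizes q p` : the vector `q` majorizes the vector `p`, i.e. the two vectors
have the same total sum and, when both are rearranged in decreasing order, every
partial sum of the first `k` entries of `p` is dominated by the corresponding partial
sum for `q`. -/
def Majorizes {n : ℕ} (q p : Fin n → ℝ) : Prop :=
  (∑ i, p i = ∑ i, q i) ∧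
    ∀ σ τ : Equiv.Perm (Fin n), Antitone (p ∘ σ) → Antitone (q ∘ τ) →
      ∀ k : ℕ,
        ∑ i ∈ Finset.univ.filter (fun i : Fin n => (i : ℕ) < k), p (σ i) ≤
          ∑ i ∈ Finset.univ.filter (fun i : Fin n => (i : ℕ) < k), q (τ i)

open Finset Matrix

theorem sum_mul_le_sum_of_threshold {ι : Type*} [Fintype ι] {F : Finset ι} {ν t : ι → ℝ}
    {c : ℝ} (hF : ∀ j ∈ F, c ≤ ν j) (hFc : ∀ j ∉ F, ν j ≤ c) (ht0 : ∀ j, 0 ≤ t j)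
    (ht1 : ∀ j, t j ≤ 1) (hts : ∑ j, t j = #F) :
    ∑ j, ν j * t j ≤ ∑ j ∈ F, ν j := by
  classical
  have hshift : ∑ j, (ν j - c) * t j ≤ ∑ j ∈ F, (ν j - c) := by
    rw [← sum_ite_mem_eq F]
    refine sum_le_sum fun j _ => ?_
    split_ifs with hj
    · exact mul_le_of_le_one_right (sub_nonneg.2 (hF j hj)) (ht1 j)
    · exact mul_nonpos_of_nonpos_of_nonneg (sub_nonpos.2 (hFc j hj)) (ht0 j)
  simp only [sub_mul, sum_sub_distrib, ← mul_sum, hts, sum_const, nsmul_eq_mul] at hshift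
  linarith

theorem Antitone.exists_threshold_fin {n : ℕ} {f : Fin n → ℝ} (hf : Antitone f) (k : ℕ) :
    ∃ c, (∀ i : Fin n, (i : ℕ) < k → c ≤ f i) ∧ ∀ i : Fin n, k ≤ (i : ℕ) → f i ≤ c := by
  rcases Nat.eq_zero_or_pos n with rfl | hn
  · exact ⟨0, fun i => i.elim0, fun i => i.elim0⟩
  refine ⟨f ⟨min k n - 1, by omega⟩, fun i hi => hf ?_, fun i hi => hf ?_⟩ <;>
    simp only [Fin.le_def] <;> omega

lemma matrixEigs_of_isHermitian {n : ℕ} {M : Matrix (Fin n) (Fin n) ℝ} (hM : M.IsHermitian) :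
    matrixEigs M = hM.eigenvalues :=
  dif_pos hM

namespace Matrix

variable {ι : Type*}

lemma one_sub_hadamard_of_diag_eq_one [DecidableEq ι] {R : Type*} [Ring R] {C : Matrix ι ι R}
    (hC : C.diag = 1) (P : Matrix ι ι R) : 1 - P ⊙ C = (1 - P) ⊙ C := by
  ext i j
  by_cases hij : i = j
  · subst hij
    have hCi : C i i = 1 := congrFun hC i
    simp [hadamard_apply, hCi]
  · simp [hadamard_apply, hij]

variable [Fintype ι]

lemma trace_hadamard_of_diag_eq_one {R : Type*} [Semiring R] {C : Matrix ι ι R}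
    (hC : C.diag = 1) (P : Matrix ι ι R) : (P ⊙ C).trace = P.trace := by
  have hCi : ∀ i, C i i = 1 := congrFun hC
  simp [trace, hadamard_apply, hCi]

lemma trace_hadamard_mul {R : Type*} [CommSemiring R] (P C B : Matrix ι ι R) :
    ((P ⊙ C) * B).trace = (P * (Cᵀ ⊙ B)).trace := by
  simp only [trace, diag, mul_apply, hadamard_apply, transpose_apply]
  exact sum_congr rfl fun i _ => sum_congr rfl fun j _ => by ring

variable [DecidableEq ι]

lemma trace_mul_mul_star_of_star_mul_self {R : Type*} [CommSemiring R] [StarRing R]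
    {U : Matrix ι ι R} (hU : star U * U = 1) (X : Matrix ι ι R) :
    (U * X * star U).trace = X.trace := by
  rw [trace_mul_cycle, hU, one_mul]

lemma IsHermitian.eq_eigenvectorUnitary_mul_diagonal_mul_star {M : Matrix ι ι ℝ}
    (hM : M.IsHermitian) :
    M = (hM.eigenvectorUnitary : Matrix ι ι ℝ) * diagonal hM.eigenvalues *
      star (hM.eigenvectorUnitary : Matrix ι ι ℝ) := by
  conv_lhs => rw [hM.spectral_theorem, Unitary.conjStarAlgAut_apply]
  simp [RCLike.ofReal_real_eq_id]

lemma IsHermitian.exists_trace_mul_eq_sum_eigenvalues {M : Matrix ι ι ℝ} (hM : M.IsHermitian)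
    (S : Finset ι) :
    ∃ P : Matrix ι ι ℝ, P.PosSemidef ∧ (1 - P).PosSemidef ∧ P.trace = #S ∧
      (P * M).trace = ∑ i ∈ S, hM.eigenvalues i := by
  set U : Matrix ι ι ℝ := (hM.eigenvectorUnitary : Matrix ι ι ℝ)
  have hU : star U * U = 1 := Unitary.star_mul_self_of_mem hM.eigenvectorUnitary.2
  set d : ι → ℝ := fun i => if i ∈ S then 1 else 0
  have hd0 : 0 ≤ d := fun i => by dsimp only [d]; split_ifs <;> norm_num
  have hd1 : 0 ≤ 1 - d := fun i => by simp only [d, Pi.sub_apply]; split_ifs <;> norm_num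
  refine ⟨U * diagonal d * star U, ?_, ?_, ?_, ?_⟩
  · exact (PosSemidef.diagonal hd0).mul_mul_conjTranspose_same U
  · have h := (PosSemidef.diagonal hd1).mul_mul_conjTranspose_same U
    rwa [← star_eq_conjTranspose, Pi.sub_def, ← diagonal_sub, Pi.one_def, diagonal_one, mul_sub,
      sub_mul, mul_one, Unitary.mul_star_self_of_mem hM.eigenvectorUnitary.2] at h
  · simp [trace_mul_mul_star_of_star_mul_self hU, d]
  · conv_lhs => rw [hM.eq_eigenvectorUnitary_mul_diagonal_mul_star]
    rw [show U * diagonal d * star U * (U * diagonal hM.eigenvalues * star U)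
        = U * (diagonal d * (star U * U) * diagonal hM.eigenvalues) * star U by
          simp only [mul_assoc],
      hU, mul_one, diagonal_mul_diagonal, trace_mul_mul_star_of_star_mul_self hU]
    simp [d]

theorem IsHermitian.trace_mul_le_sum_eigenvalues {B Q : Matrix ι ι ℝ} (hB : B.IsHermitian)
    (hQ : Q.PosSemidef) (hQ1 : (1 - Q).PosSemidef) {F : Finset ι} {c : ℝ}
    (hF : ∀ j ∈ F, c ≤ hB.eigenvalues j) (hFc : ∀ j ∉ F, hB.eigenvalues j ≤ c)
    (htr : Q.trace = #F) : (Q * B).trace ≤ ∑ j ∈ F, hB.eigenvalues j := by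
  set V : Matrix ι ι ℝ := (hB.eigenvectorUnitary : Matrix ι ι ℝ)
  have hV : star V * V = 1 := Unitary.star_mul_self_of_mem hB.eigenvectorUnitary.2
  have hV' : V * star V = 1 := Unitary.mul_star_self_of_mem hB.eigenvectorUnitary.2
  set R := star V * Q * V
  have hR : R.PosSemidef := hQ.conjTranspose_mul_mul_same V
  have hR1 : (1 - R).PosSemidef := by
    have h := hQ1.conjTranspose_mul_mul_same V
    rwa [← star_eq_conjTranspose, mul_sub, sub_mul, mul_one, hV] at h
  have htrace : (Q * B).trace = ∑ j, hB.eigenvalues j * R j j := by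
    conv_lhs => rw [hB.eq_eigenvectorUnitary_mul_diagonal_mul_star]
    rw [show Q * (V * diagonal hB.eigenvalues * star V)
        = V * (R * diagonal hB.eigenvalues) * star V by simp only [R, ← mul_assoc, hV', one_mul],
      trace_mul_mul_star_of_star_mul_self hV]
    simp [trace, mul_diagonal, mul_comm]
  have htrR : ∑ j, R j j = #F := by
    change R.trace = _
    rw [← htr, trace_mul_cycle, hV', one_mul]
  rw [htrace]
  exact sum_mul_le_sum_of_threshold hF hFc (fun j => hR.diag_nonneg)
    (fun j => by simpa using hR1.diag_nonneg (i := j)) htrR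

theorem IsHermitian.trace_mul_le_sum_eigenvalues_filter_lt {n : ℕ}
    {B Q : Matrix (Fin n) (Fin n) ℝ} (hB : B.IsHermitian) (hQ : Q.PosSemidef)
    (hQ1 : (1 - Q).PosSemidef) {τ : Equiv.Perm (Fin n)} (hτ : Antitone (hB.eigenvalues ∘ τ))
    {k : ℕ} (htr : Q.trace = #(univ.filter fun i : Fin n => (i : ℕ) < k)) :
    (Q * B).trace ≤ ∑ i ∈ univ.filter (fun i : Fin n => (i : ℕ) < k), hB.eigenvalues (τ i) := by
  obtain ⟨c, hc_lt, hc_ge⟩ := hτ.exists_threshold_fin k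
  have hle := hB.trace_mul_le_sum_eigenvalues hQ hQ1
    (F := (univ.filter fun i : Fin n => (i : ℕ) < k).map τ.toEmbedding) (c := c)
    (fun j hj => by
      have := hc_lt (τ.symm j) (by simpa using hj)
      rwa [Function.comp_apply, Equiv.apply_symm_apply] at this)
    (fun j hj => by
      have := hc_ge (τ.symm j) (by simpa using hj)
      rwa [Function.comp_apply, Equiv.apply_symm_apply] at this) (by rwa [card_map])
  rwa [sum_map] at hle

end Matrix

theorem eigenvalues_hadamard_majorized_general {n : ℕ}
    (A B : Matrix (Fin n) (Fin n) ℝ)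
    (hA : A.PosSemidef) (hB : B.PosSemidef)
    (hdiag : ∀ i, A i i = 1 / (n : ℝ)) :
    Majorizes (matrixEigs B) (fun i => (n : ℝ) * matrixEigs (A ⊙ B) i) := by
  rcases Nat.eq_zero_or_pos n with rfl | hn
  · simp [Majorizes]
  have hH : (A ⊙ B).IsHermitian := hA.1.hadamard hB.1
  set C : Matrix (Fin n) (Fin n) ℝ := (n : ℝ) • A
  have hC : C.PosSemidef := hA.smul (Nat.cast_nonneg n)
  have hCdiag : C.diag = 1 := funext fun i => by simp [C, hdiag, hn.ne']
  have hscale (P : Matrix (Fin n) (Fin n) ℝ) :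
      (n : ℝ) * (P * (A ⊙ B)).trace = ((P ⊙ C) * B).trace := by
    rw [trace_hadamard_mul, ← conjTranspose_eq_transpose_of_trivial, hC.1, smul_hadamard,
      mul_smul_comm, trace_smul, smul_eq_mul]
  rw [matrixEigs_of_isHermitian hB.1, matrixEigs_of_isHermitian hH]
  refine ⟨?_, fun σ τ _ hτ k => ?_⟩
  · simpa [← mul_sum, hH.trace_eq_sum_eigenvalues, hB.1.trace_eq_sum_eigenvalues,
      one_hadamard_eq_one_iff.mpr hCdiag] using hscale 1
  obtain ⟨P, hP, hP1, htrP, hPH⟩ := hH.exists_trace_mul_eq_sum_eigenvalues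
    ((univ.filter fun i : Fin n => (i : ℕ) < k).map σ.toEmbedding)
  calc _ = (n : ℝ) * (P * (A ⊙ B)).trace := by rw [hPH, sum_map, mul_sum]; rfl
    _ = ((P ⊙ C) * B).trace := hscale P
    _ ≤ _ := hB.1.trace_mul_le_sum_eigenvalues_filter_lt (hP.hadamard hC)
      (one_sub_hadamard_of_diag_eq_one hCdiag P ▸ hP1.hadamard hC) hτ
      (by rw [trace_hadamard_of_diag_eq_one hCdiag, htrP, card_map])

theorem eigenvalues_hadamard_majorized {n : ℕ}
    (A B : Matrix (Fin n) (Fin n) ℝ)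
    (hA : A.PosSemidef) (hB : B.PosSemidef)
    (hAnn : ∀ i j, 0 ≤ A i j) (hBnn : ∀ i j, 0 ≤ B i j)
    (htrA : A.trace = 1) (htrB : B.trace = 1)
    (hdiag : ∀ i, A i i = 1 / (n : ℝ)) :
    Majorizes (matrixEigs B) (fun i => (n : ℝ) * matrixEigs (A ⊙ B) i) :=
  eigenvalues_hadamard_majorized_general A B hA hB hdiag
end

section
/- Let A be an n×n real symmetric infinitely divisible matrix with strictly positive entries, i.e., the entrywise power A^{∘r} with entries A_{ij}^r is positive semidefinite for every r ≥ 0. Then the matrix B with entries B_{ij} = −log A_{ij} is negative definite, i.e., Σ_{i,j=1}^n α_i α_j B_{ij} ≤ 0 for every α ∈ ℝⁿ with Σ_{i=1}^n α_i = 0. -/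
open scoped BigOperators Matrix

/-!
For `∑ i, v i = 0`, the quadratic form `f r = ∑ i j, v i v j (A i j)^r` of the Hadamard power
`A^∘r` is nonnegative for `r ≥ 0` and vanishes at `r = 0`, where `A^∘0` is the all-ones matrix.
Hence its derivative at `0`, which is `∑ i j, v i v j log (A i j)`, is nonnegative.
-/

open Real Set

lemma HasDerivWithinAt.nonneg_of_isMinOn_Ici {f : ℝ → ℝ} {f' a : ℝ}
    (hf : HasDerivWithinAt f f' (Ici a) a) (hmin : IsMinOn f (Ici a) a) : 0 ≤ f' := by
  have hone : (1 : ℝ) ∈ posTangentConeAt (Ici a) a :=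
    mem_posTangentConeAt_of_segment_subset <|
      (segment_subset_Icc (by simp)).trans Icc_subset_Ici_self
  simpa using hmin.localize.hasFDerivWithinAt_nonneg hf.hasFDerivWithinAt hone

section QuadraticForm

variable {ι : Type*} [Fintype ι]

lemma Matrix.PosSemidef.sum_sum_mul_nonneg {M : Matrix ι ι ℝ} (hM : M.PosSemidef)
    (v : ι → ℝ) : 0 ≤ ∑ i, ∑ j, v i * v j * M i j := by
  have h := hM.dotProduct_mulVec_nonneg v
  simp only [dotProduct, Matrix.mulVec, star_trivial, Finset.mul_sum] at h
  exact h.trans_eq (by simp only [mul_comm, mul_left_comm])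

lemma sum_sum_mul_const_eq_zero {v : ι → ℝ} (hv : ∑ i, v i = 0) (c : ℝ) :
    ∑ i, ∑ j, v i * v j * c = 0 := by
  simp [← Finset.sum_mul, ← Finset.mul_sum, hv]

lemma hasDerivAt_sum_sum_mul_rpow {A : ι → ι → ℝ} (hA : ∀ i j, 0 < A i j) (v : ι → ℝ)
    (r : ℝ) : HasDerivAt (fun r => ∑ i, ∑ j, v i * v j * A i j ^ r)
      (∑ i, ∑ j, v i * v j * (A i j ^ r * log (A i j))) r :=
  HasDerivAt.fun_sum fun i _ => HasDerivAt.fun_sum fun j _ =>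
    ((hasStrictDerivAt_const_rpow (hA i j) r).hasDerivAt).const_mul _

end QuadraticForm

theorem neg_log_of_infinitely_divisible_is_negative_definite_general {n : ℕ}
    (A : Matrix (Fin n) (Fin n) ℝ)
    (hpos : ∀ i j, 0 < A i j)
    (hID : ∀ r : ℝ, 0 ≤ r → (Matrix.of fun i j => A i j ^ r).PosSemidef) :
    ∀ v : Fin n → ℝ, ∑ i, v i = 0 →
      ∑ i, ∑ j, v i * v j * (-Real.log (A i j)) ≤ 0 := by
  intro v hv
  set f : ℝ → ℝ := fun r => ∑ i, ∑ j, v i * v j * A i j ^ r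
  have hf0 : f 0 = 0 := by simpa [f] using sum_sum_mul_const_eq_zero hv 1
  have hmin : IsMinOn f (Ici 0) 0 := fun r hr =>
    hf0.trans_le <| by simpa using (hID r hr).sum_sum_mul_nonneg v
  have hderiv :=
    (hasDerivAt_sum_sum_mul_rpow hpos v 0).hasDerivWithinAt.nonneg_of_isMinOn_Ici hmin
  simp only [rpow_zero, one_mul] at hderiv
  simpa [mul_neg, Finset.sum_neg_distrib] using hderiv

theorem neg_log_of_infinitely_divisible_is_negative_definite {n : ℕ}
    (A : Matrix (Fin n) (Fin n) ℝ) (hsymm : A.IsSymm)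
    (hpos : ∀ i j, 0 < A i j)
    (hID : ∀ r : ℝ, 0 ≤ r → (Matrix.of fun i j => A i j ^ r).PosSemidef) :
    ∀ v : Fin n → ℝ, ∑ i, v i = 0 →
      ∑ i, ∑ j, v i * v j * (-Real.log (A i j)) ≤ 0 :=
  neg_log_of_infinitely_divisible_is_negative_definite_general A hpos hID
end
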